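/- Let J be the ideal of ℤ[x] generated by 3(2x−1) and (2x−1)² and let R = ℤ[x]/J. Then R has exactly 4 unital subrings generated by one element, i.e., the set {S : S is a subring of R and S = ⟨a⟩₁ for some a ∈ R} has exactly 4 elements. (Since R is commutative, its unital compressed commuting graph is the complete graph with all loops on 4 vertices.) -/

import Mathlib

/-!
Write `t = 2x - 1`. In `R = ℤ[x]/J` we have `3t = t² = 0`, hence `t(x - 2) = 0` and
`2(3x - 1) = 1`: the element `half = 3x - 1` inverts `2`, and the kernel of evaluation
`R → ℚ` at `x = 1/2` is `ℤt ≅ ℤ/3` (Gauss's lemma for `2X - 1`). So `R ≅ ℤ[1/2] ⊕ 𝔽₃t`.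
A subring `ℤ[a]` has image `ℤ` or `ℤ[1/2]` in `ℚ`, and it either contains `t` or meets the
kernel trivially, since every nonzero multiple of `t` generates `t` over `ℤ`. The four cases
give `ℤ`, `ℤ[t]`, `ℤ[1/2] = ℤ[half]` and `R`; the two evaluations `R → ℤ/9` at `x = 2`
and `x = 5` agree on `ℤ[half]` but not on `t`.
-/

open Polynomial

theorem Polynomial.aeval_mem_closure_singleton {A : Type*} [Ring A] (a : A) (p : ℤ[X]) :
    aeval a p ∈ Subring.closure {a} := by
  simpa [Algebra.adjoin_int] using aeval_mem_adjoin_singleton ℤ a (p := p)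

theorem RingHom.map_aeval_int {A B : Type*} [CommRing A] [CommRing B] [Algebra ℤ A] [Algebra ℤ B]
    (f : A →+* B) (a : A) (p : ℤ[X]) : f (aeval a p) = aeval (f a) p := by
  rw [aeval_def, aeval_def, hom_eval₂, Subsingleton.elim (f.comp _) (algebraMap ℤ B)]

theorem two_mul_X_sub_one_dvd_of_aeval_half_eq_zero {p : ℤ[X]} (hp : aeval (1 / 2 : ℚ) p = 0) :
    2 * X - 1 ∣ p := by
  have hprim : (2 * X - 1 : ℤ[X]).IsPrimitive := by
    refine isPrimitive_iff_isUnit_of_C_dvd.2 fun r hr => ?_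
    have := (C_dvd_iff_dvd_coeff r _).1 hr 0
    simp only [coeff_sub, coeff_one_zero, mul_coeff_zero, coeff_X_zero, mul_zero, zero_sub] at this
    exact isUnit_of_dvd_unit this isUnit_one.neg
  rw [IsPrimitive.Int.dvd_iff_map_cast_dvd_map_cast _ _ hprim]
  have hfactor : (2 * X - 1 : ℤ[X]).map (Int.castRingHom ℚ) = C 2 * (X - C (1 / 2)) := by
    simp only [Polynomial.map_sub, Polynomial.map_mul, Polynomial.map_ofNat, map_X,
      Polynomial.map_one]
    rw [mul_sub, ← C_mul]; norm_num; rfl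
  rw [hfactor, (isUnit_C.2 (isUnit_of_invertible (2 : ℚ))).mul_left_dvd, dvd_iff_isRoot, IsRoot,
    ← algebraMap_int_eq, eval_map_algebraMap, hp]

theorem one_half_mem_closure_of_two_pow_mul_eq_intCast {q : ℚ} (hq : q ∉ (⊥ : Subring ℚ))
    (n : ℕ) (m : ℤ) (hqm : 2 ^ n * q = m) : (1 / 2 : ℚ) ∈ Subring.closure {q} := by
  induction n generalizing m with
  | zero => exact absurd (Subring.mem_bot.2 ⟨m, by simpa using hqm.symm⟩) hq
  | succ n ih =>
    rcases Int.even_or_odd' m with ⟨m, rfl | rfl⟩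
    · exact ih m (by push_cast at hqm; rw [pow_succ] at hqm; linarith)
    · obtain ⟨α, β, hαβ⟩ : IsCoprime (2 * m + 1) (2 ^ (n + 1)) :=
        (Int.isCoprime_iff_gcd_eq_one.2 (by simp [Int.gcd_comm])).pow_right
      have hhalf : (1 / 2 : ℚ) = 2 ^ n * (α * q + β) := by
        have hαβ' : (α : ℚ) * (2 * m + 1) + β * 2 ^ (n + 1) = 1 := by exact_mod_cast hαβ
        push_cast at hqm
        linear_combination (-1 / 2 : ℚ) * hαβ' - (α / 2 : ℚ) * hqm
      rw [hhalf]
      have hq : q ∈ Subring.closure {q} := Subring.subset_closure rfl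
      exact mul_mem (pow_mem (by simp) n)
        (add_mem (mul_mem (intCast_mem _ α) hq) (intCast_mem _ β))

namespace DyadicExt

noncomputable section

abbrev J : Ideal ℤ[X] := Ideal.span {3 * (2 * X - 1), (2 * X - 1) ^ 2}

abbrev R : Type := ℤ[X] ⧸ J

def x : R := Ideal.Quotient.mk J X

def t : R := 2 * x - 1

def half : R := 3 * x - 1

theorem t_def : t = 2 * x - 1 := rfl

theorem mk_eq_aeval_x (p : ℤ[X]) : Ideal.Quotient.mk J p = aeval x p := by
  rw [x, ← Ideal.Quotient.mkₐ_eq_mk ℤ, aeval_algHom_apply, aeval_X_left_apply]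

theorem three_mul_t_eq_zero : 3 * t = 0 := by
  have := Ideal.Quotient.eq_zero_iff_mem.2 (Ideal.subset_span (Set.mem_insert _ _) :
    (3 * (2 * X - 1) : ℤ[X]) ∈ J)
  simpa [mk_eq_aeval_x, map_ofNat, t] using this

theorem t_sq_eq_zero : t ^ 2 = 0 := by
  have := Ideal.Quotient.eq_zero_iff_mem.2 (Ideal.subset_span (Set.mem_insert_of_mem _ rfl) :
    ((2 * X - 1) ^ 2 : ℤ[X]) ∈ J)
  simpa [mk_eq_aeval_x, map_ofNat, t] using this

theorem two_mul_half_eq_one : 2 * half = 1 := by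
  rw [half]; linear_combination three_mul_t_eq_zero - 3 * t_def

theorem eq_half_of_two_mul_eq_one {b : R} (hb : 2 * b = 1) : b = half := by
  linear_combination half * hb - b * two_mul_half_eq_one

theorem t_mul_aeval_x (g : ℤ[X]) : t * aeval x g = ((g.eval 2 : ℤ) : R) * t := by
  have ht : t * (x - 2) = 0 := by
    linear_combination (x - 1) * three_mul_t_eq_zero - t_sq_eq_zero + t * t_def
  obtain ⟨k, hk⟩ := X_sub_C_dvd_sub_C_eval (a := (2 : ℤ)) (p := g)
  have hg : aeval x g = (x - 2) * aeval x k + ((g.eval 2 : ℤ) : R) := by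
    conv_lhs => rw [eq_add_of_sub_eq hk]
    simp [map_ofNat]
  rw [hg]
  linear_combination aeval x k * ht

theorem aeval_x_surjective : Function.Surjective (aeval x : ℤ[X] →ₐ[ℤ] R) := fun a => by
  obtain ⟨p, rfl⟩ := Ideal.Quotient.mk_surjective a
  exact ⟨p, (mk_eq_aeval_x p).symm⟩

section lift

variable {S : Type*} [CommRing S]

def lift (s : S) (h₁ : 3 * (2 * s - 1) = 0) (h₂ : (2 * s - 1) ^ 2 = 0) : R →+* S :=
  Ideal.Quotient.lift J (aeval s).toRingHom fun p hp => by
    refine (Ideal.span_le (I := RingHom.ker (aeval s).toRingHom)).2 ?_ hp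
    simp [Set.insert_subset_iff, map_ofNat, h₁, h₂]

theorem lift_aeval_x (s : S) (h₁ : 3 * (2 * s - 1) = 0) (h₂ : (2 * s - 1) ^ 2 = 0) (p : ℤ[X]) :
    lift s h₁ h₂ (aeval x p) = aeval s p := by
  rw [← mk_eq_aeval_x]; exact Ideal.Quotient.lift_mk _ _ _

theorem lift_x (s : S) (h₁ : 3 * (2 * s - 1) = 0) (h₂ : (2 * s - 1) ^ 2 = 0) :
    lift s h₁ h₂ x = s := by
  simpa using lift_aeval_x s h₁ h₂ X

end lift

def toRat : R →+* ℚ := lift (1 / 2 : ℚ) (by norm_num) (by norm_num)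

theorem toRat_aeval_x (p : ℤ[X]) : toRat (aeval x p) = aeval (1 / 2 : ℚ) p := lift_aeval_x ..

@[simp] theorem toRat_x : toRat x = 1 / 2 := by simpa using toRat_aeval_x X

@[simp] theorem toRat_t : toRat t = 0 := by simp [t, map_ofNat]

@[simp] theorem toRat_half : toRat half = 1 / 2 := by simp [half, map_ofNat]; norm_num

theorem exists_eq_intCast_mul_t_of_toRat_eq_zero {y : R} (hy : toRat y = 0) :
    ∃ j : ℤ, y = j * t := by
  obtain ⟨p, rfl⟩ := aeval_x_surjective y
  rw [toRat_aeval_x] at hy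
  obtain ⟨g, rfl⟩ := two_mul_X_sub_one_dvd_of_aeval_half_eq_zero hy
  refine ⟨g.eval 2, ?_⟩
  rw [map_mul, ← t_mul_aeval_x]
  simp [map_ofNat, t_def]

theorem exists_two_pow_mul_toRat_eq_intCast (a : R) :
    ∃ (n : ℕ) (m : ℤ), 2 ^ n * toRat a = m := by
  obtain ⟨p, rfl⟩ := aeval_x_surjective a
  simp only [toRat_aeval_x]
  induction p using Polynomial.induction_on' with
  | add p q hp hq =>
    obtain ⟨n₁, m₁, h₁⟩ := hp
    obtain ⟨n₂, m₂, h₂⟩ := hq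
    refine ⟨n₁ + n₂, 2 ^ n₂ * m₁ + 2 ^ n₁ * m₂, ?_⟩
    push_cast
    rw [map_add]
    linear_combination 2 ^ n₂ * h₁ + 2 ^ n₁ * h₂
  | monomial n c =>
    refine ⟨n, c, ?_⟩
    simp only [aeval_monomial, algebraMap_int_eq, eq_intCast, one_div, inv_pow]
    field_simp

theorem t_mem_of_toRat_eq_zero {S : Subring R} {y : R} (hyS : y ∈ S) (hy : toRat y = 0)
    (hy0 : y ≠ 0) : t ∈ S := by
  obtain ⟨j, rfl⟩ := exists_eq_intCast_mul_t_of_toRat_eq_zero hy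
  -- `3 ∣ j` would force `j * t = 0`, so `j ≡ ±1 [ZMOD 3]` and `j * (j * t) = t`.
  obtain ⟨k, rfl | rfl | rfl⟩ : ∃ k : ℤ, j = 3 * k ∨ j = 3 * k + 1 ∨ j = 3 * k - 1 :=
    ⟨(j + 1) / 3, by omega⟩
  · exact absurd (by push_cast; linear_combination k * three_mul_t_eq_zero) hy0
  · convert S.mul_mem (intCast_mem S (3 * k + 1)) hyS using 1
    push_cast; linear_combination (-3 * (k : R) ^ 2 - 2 * k) * three_mul_t_eq_zero
  · convert S.mul_mem (intCast_mem S (3 * k - 1)) hyS using 1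
    push_cast; linear_combination (-3 * (k : R) ^ 2 + 2 * k) * three_mul_t_eq_zero

theorem closure_x : Subring.closure {x} = ⊤ :=
  eq_top_iff.2 fun a _ => by
    obtain ⟨p, rfl⟩ := aeval_x_surjective a
    exact aeval_mem_closure_singleton x p

theorem eq_top_of_t_mem {S : Subring R} (ht : t ∈ S) {b : R} (hb : b ∈ S)
    (hb2 : toRat b = 1 / 2) : S = ⊤ := by
  obtain ⟨j, hj⟩ := exists_eq_intCast_mul_t_of_toRat_eq_zero (y := b - x) (by simp [hb2])
  have hx : x ∈ S := by
    rw [show x = b - j * t by linear_combination -hj]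
    exact S.sub_mem hb (S.mul_mem (intCast_mem S j) ht)
  rw [eq_top_iff, ← closure_x, Subring.closure_le, Set.singleton_subset_iff]
  exact hx

theorem exists_mem_closure_toRat_eq_half {a : R} (ha : toRat a ∉ (⊥ : Subring ℚ)) :
    ∃ b ∈ Subring.closure {a}, toRat b = 1 / 2 := by
  obtain ⟨n, m, hnm⟩ := exists_two_pow_mul_toRat_eq_intCast a
  have := one_half_mem_closure_of_two_pow_mul_eq_intCast ha n m hnm
  rwa [← Set.image_singleton, ← RingHom.map_closure, Subring.mem_map] at this

theorem exists_mem_closure_half_toRat_eq (a : R) :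
    ∃ c ∈ Subring.closure {half}, toRat c = toRat a := by
  obtain ⟨p, rfl⟩ := aeval_x_surjective a
  exact ⟨aeval half p, aeval_mem_closure_singleton half p, by
    rw [RingHom.map_aeval_int, RingHom.map_aeval_int, toRat_half, toRat_x]⟩

theorem closure_eq_bot_or_closure_t {a : R} {n : ℤ} (ha : toRat a = n) :
    Subring.closure {a} = ⊥ ∨ Subring.closure {a} = Subring.closure {t} := by
  obtain ⟨j, hj⟩ := exists_eq_intCast_mul_t_of_toRat_eq_zero (y := a - n) (by simp [ha])
  by_cases h0 : a - n = 0
  · left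
    rw [sub_eq_zero.1 h0, Subring.closure_singleton_intCast]
  right
  have haS : a ∈ Subring.closure {a} := Subring.subset_closure rfl
  apply le_antisymm <;> rw [Subring.closure_le, Set.singleton_subset_iff]
  · rw [show a = n + j * t by linear_combination hj]
    have htS : t ∈ Subring.closure {t} := Subring.subset_closure rfl
    exact add_mem (intCast_mem _ n) (mul_mem (intCast_mem _ j) htS)
  · exact t_mem_of_toRat_eq_zero (sub_mem haS (intCast_mem _ n)) (by simp [ha]) h0

theorem closure_eq_closure_half_or_top {a : R} (ha : toRat a ∉ (⊥ : Subring ℚ)) :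
    Subring.closure {a} = Subring.closure {half} ∨ Subring.closure {a} = ⊤ := by
  set S := Subring.closure {a}
  obtain ⟨b, hbS, hb⟩ := exists_mem_closure_toRat_eq_half ha
  by_cases ht : t ∈ S
  · exact Or.inr (eq_top_of_t_mem ht hbS hb)
  left
  have hker : ∀ y ∈ S, toRat y = 0 → y = 0 := fun y hyS hy =>
    by_contra fun hy0 => ht (t_mem_of_toRat_eq_zero hyS hy hy0)
  have hhalf : half ∈ S := by
    have h2b : 2 * b - 1 = 0 :=
      hker _ (sub_mem (mul_mem (by simp) hbS) (one_mem S)) (by simp [map_ofNat, hb])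
    rwa [← eq_half_of_two_mul_eq_one (sub_eq_zero.1 h2b)]
  have hle : Subring.closure {half} ≤ S := Subring.closure_le.2 (Set.singleton_subset_iff.2 hhalf)
  obtain ⟨c, hc, hca⟩ := exists_mem_closure_half_toRat_eq a
  have hac : a = c :=
    sub_eq_zero.1 (hker _ (sub_mem (Subring.subset_closure rfl) (hle hc)) (by simp [hca]))
  refine le_antisymm ?_ hle
  rw [Subring.closure_le, Set.singleton_subset_iff, hac]
  exact hc

theorem one_half_notMem_bot : (1 / 2 : ℚ) ∉ (⊥ : Subring ℚ) := by
  intro h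
  obtain ⟨n, hn⟩ := Subring.mem_bot.1 h
  have h2n : ((2 * n : ℤ) : ℚ) = 1 := by push_cast; rw [hn]; norm_num
  have := Int.cast_eq_one.1 h2n
  omega

theorem half_notMem_closure_t : half ∉ Subring.closure {t} := fun h => by
  have hle : Subring.closure {t} ≤ (⊥ : Subring ℚ).comap toRat :=
    Subring.closure_le.2 (Set.singleton_subset_iff.2 (by simp))
  exact one_half_notMem_bot (by simpa using hle h)

theorem t_notMem_closure_half : t ∉ Subring.closure {half} := fun h => by
  let ψ₂ := lift (2 : ZMod 9) (by decide) (by decide)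
  let ψ₅ := lift (5 : ZMod 9) (by decide) (by decide)
  have hle : Subring.closure {half} ≤ ψ₂.eqLocus ψ₅ :=
    Subring.closure_le.2 (Set.singleton_subset_iff.2 (by
      change ψ₂ half = ψ₅ half
      simp only [ψ₂, ψ₅, half, map_sub, map_mul, map_ofNat, map_one, lift_x]
      decide))
  have : ψ₂ t = ψ₅ t := hle h
  simp only [ψ₂, ψ₅, t_def, map_sub, map_mul, map_ofNat, map_one, lift_x] at this
  exact absurd this (by decide)

theorem setOf_exists_eq_closure_singleton :
    {S : Subring R | ∃ a, S = Subring.closure {a}} =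
      {⊥, Subring.closure {t}, Subring.closure {half}, ⊤} := by
  ext S
  constructor
  · rintro ⟨a, rfl⟩
    by_cases ha : toRat a ∈ (⊥ : Subring ℚ)
    · obtain ⟨n, hn⟩ := Subring.mem_bot.1 ha
      rcases closure_eq_bot_or_closure_t hn.symm with h | h <;> simp [h]
    · rcases closure_eq_closure_half_or_top ha with h | h <;> simp [h]
  · rintro (rfl | rfl | rfl | rfl)
    exacts [⟨0, Subring.closure_singleton_zero.symm⟩, ⟨t, rfl⟩, ⟨half, rfl⟩, ⟨x, closure_x.symm⟩]

end

end DyadicExt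

open DyadicExt in
/-- The quotient of `ℤ[x]` by the ideal generated by `3(2x-1)` and `(2x-1)²` has
exactly `4` one-generated unital subrings. -/
theorem stmt_18 :
    Nat.card {S : Subring
        (Polynomial ℤ ⧸ (Ideal.span {3 * (2 * X - 1), (2 * X - 1) ^ 2} : Ideal (Polynomial ℤ))) |
      ∃ a, S = Subring.closure {a}} = 4 := by
  have ht : t ∈ Subring.closure {t} := Subring.subset_closure rfl
  have hh : half ∈ Subring.closure {half} := Subring.subset_closure rfl
  have ht' : t ∉ (⊥ : Subring R) := fun h =>
    t_notMem_closure_half ((bot_le : ⊥ ≤ Subring.closure {half}) h)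
  have hh' : half ∉ (⊥ : Subring R) := fun h =>
    half_notMem_closure_t ((bot_le : ⊥ ≤ Subring.closure {t}) h)
  rw [setOf_exists_eq_closure_singleton, Nat.card_coe_set_eq, Set.ncard_insert_of_notMem,
    Set.ncard_insert_of_notMem,
    Set.ncard_pair (ne_of_mem_of_not_mem' (Subring.mem_top t) t_notMem_closure_half).symm]
  · simp only [Set.mem_insert_iff, Set.mem_singleton_iff, not_or]
    exact ⟨ne_of_mem_of_not_mem' ht t_notMem_closure_half,
      (ne_of_mem_of_not_mem' (Subring.mem_top half) half_notMem_closure_t).symm⟩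
  · simp only [Set.mem_insert_iff, Set.mem_singleton_iff, not_or]
    exact ⟨(ne_of_mem_of_not_mem' ht ht').symm, (ne_of_mem_of_not_mem' hh hh').symm,
      (ne_of_mem_of_not_mem' (Subring.mem_top t) ht').symm⟩
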